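/- arXiv:1609.05164 — 4 statements merged into one kernel-verified Lean document; each statement's English description precedes it below -/
import Mathlib

section
/- Let f : ℝ → ℝ be twice continuously differentiable with |f''(x)| ≤ M for all x. Then for any finite list of nonnegative reals a₁, …, aₙ, we have |f(a₁ + ⋯ + aₙ) − (f(a₁) + ⋯ + f(aₙ)) + (n−1)·f(0)| ≤ 2·M·∑_{1 ≤ i < j ≤ n} aᵢ·aⱼ. -/
/-!
The second difference `f (x + y) - f x - f y + f 0` is `g x - g 0` for `g t = f (t + y) - f t`,
and `|g'| ≤ M |y|` because `f'` is `M`-Lipschitz; so it is bounded by `M |x| |y|`. Splitting off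
one summand at a time, the defect `f (∑ aᵢ) - ∑ f aᵢ + (n - 1) f 0` is a sum of such second
differences, giving the bound `M ∑_{i<j} |aᵢ| |aⱼ|`.
-/

open Finset

lemma abs_sub_le_mul_abs_sub_of_abs_deriv_le {g : ℝ → ℝ} {C : ℝ} (hg : Differentiable ℝ g)
    (hC : ∀ x, |deriv g x| ≤ C) (x y : ℝ) : |g y - g x| ≤ C * |y - x| :=
  Convex.norm_image_sub_le_of_norm_deriv_le (fun z _ => hg z) (fun z _ => hC z) convex_univ
    (Set.mem_univ x) (Set.mem_univ y)

lemma abs_second_difference_le {f : ℝ → ℝ} {M : ℝ} (hf : Differentiable ℝ f)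
    (hf' : Differentiable ℝ (deriv f)) (hM : ∀ x, |deriv (deriv f) x| ≤ M) (x y : ℝ) :
    |f (x + y) - f x - f y + f 0| ≤ M * |x| * |y| := by
  set g : ℝ → ℝ := fun t => f (t + y) - f t
  have hg : Differentiable ℝ g := by fun_prop
  have hg' : ∀ t, deriv g t = deriv f (t + y) - deriv f t := fun t =>
    (((hf (t + y)).hasDerivAt.comp_add_const t y).sub (hf t).hasDerivAt).deriv
  have hg'_le : ∀ t, |deriv g t| ≤ M * |y| := fun t => by
    simpa [hg'] using abs_sub_le_mul_abs_sub_of_abs_deriv_le hf' hM t (t + y)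
  calc |f (x + y) - f x - f y + f 0| = |g x - g 0| := by simp only [g]; ring_nf
    _ ≤ M * |y| * |x - 0| := abs_sub_le_mul_abs_sub_of_abs_deriv_le hg hg'_le 0 x
    _ = M * |x| * |y| := by rw [sub_zero]; ring

lemma sum_filter_fst_lt_snd_fin_succ {β : Type*} [AddCommMonoid β] (n : ℕ)
    (g : Fin (n + 1) → Fin (n + 1) → β) :
    ∑ p ∈ univ.filter (fun p : Fin (n + 1) × Fin (n + 1) => p.1 < p.2), g p.1 p.2 =
      ∑ j : Fin n, g 0 j.succ +
        ∑ p ∈ univ.filter (fun p : Fin n × Fin n => p.1 < p.2), g p.1.succ p.2.succ := by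
  simp [Finset.sum_filter, Fintype.sum_prod_type, Fin.sum_univ_succ, Fin.succ_pos]

lemma abs_map_sum_sub_sum_map_le {f : ℝ → ℝ} {M : ℝ}
    (hf : ∀ x y, |f (x + y) - f x - f y + f 0| ≤ M * |x| * |y|) (n : ℕ) (a : Fin n → ℝ) :
    |f (∑ i, a i) - ∑ i, f (a i) + ((n : ℝ) - 1) * f 0| ≤
      M * ∑ p ∈ univ.filter (fun p : Fin n × Fin n => p.1 < p.2), |a p.1| * |a p.2| := by
  induction n with
  | zero => simp
  | succ n ih =>
    have hM : 0 ≤ M := by simpa using (abs_nonneg _).trans (hf 1 1)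
    rw [Fin.sum_univ_succ, Fin.sum_univ_succ,
      sum_filter_fst_lt_snd_fin_succ n (fun i j => |a i| * |a j|), mul_add, mul_sum]
    push_cast
    set S := ∑ i : Fin n, a i.succ
    have hS : |S| ≤ ∑ i : Fin n, |a i.succ| := abs_sum_le_sum_abs _ _
    have hsplit := hf (a 0) S
    have htail := ih (fun i => a i.succ)
    calc |f (a 0 + S) - (f (a 0) + ∑ i : Fin n, f (a i.succ)) + ((n : ℝ) + 1 - 1) * f 0|
        = |(f (a 0 + S) - f (a 0) - f S + f 0) +
            (f S - ∑ i : Fin n, f (a i.succ) + ((n : ℝ) - 1) * f 0)| := by ring_nf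
      _ ≤ M * |a 0| * |S| + M * ∑ p ∈ univ.filter (fun p : Fin n × Fin n => p.1 < p.2),
            |a p.1.succ| * |a p.2.succ| := (abs_add_le _ _).trans (add_le_add hsplit htail)
      _ ≤ M * |a 0| * ∑ i : Fin n, |a i.succ| + _ := by gcongr
      _ = _ := by rw [mul_sum]; simp only [mul_assoc]

theorem stmt_1 (f : ℝ → ℝ) (M : ℝ) (hf : ContDiff ℝ 2 f)
    (hM : ∀ x, |deriv (deriv f) x| ≤ M)
    (n : ℕ) (a : Fin n → ℝ) (ha : ∀ i, 0 ≤ a i) :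
    |f (∑ i, a i) - (∑ i, f (a i)) + ((n : ℝ) - 1) * f 0| ≤
      2 * M * ∑ p ∈ Finset.univ.filter (fun p : Fin n × Fin n => p.1 < p.2),
        a p.1 * a p.2 := by
  have hM0 : 0 ≤ M := (abs_nonneg _).trans (hM 0)
  have hpairs : 0 ≤ ∑ p ∈ univ.filter (fun p : Fin n × Fin n => p.1 < p.2), a p.1 * a p.2 :=
    sum_nonneg fun p _ => mul_nonneg (ha p.1) (ha p.2)
  have hsecond := abs_second_difference_le (hf.differentiable (by norm_num))
    hf.differentiable_deriv_two hM
  calc |f (∑ i, a i) - (∑ i, f (a i)) + ((n : ℝ) - 1) * f 0|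
      ≤ M * ∑ p ∈ univ.filter (fun p : Fin n × Fin n => p.1 < p.2), |a p.1| * |a p.2| :=
        abs_map_sum_sub_sum_map_le hsecond n a
    _ = M * ∑ p ∈ univ.filter (fun p : Fin n × Fin n => p.1 < p.2), a p.1 * a p.2 := by
        simp only [abs_of_nonneg (ha _)]
    _ ≤ 2 * M * ∑ p ∈ univ.filter (fun p : Fin n × Fin n => p.1 < p.2), a p.1 * a p.2 := by
        nlinarith
end

section
/- Fix m > 0, ξ ∈ ℝ³ \ {0}, and set τ = (|ξ|²/ω²)(m − √(m² − ω²)) for 0 < ω < m, η = ξ₂ + i·ξ₁. Then the 4×4 Hermitian matrix K = (1/(|ξ|²(ω² + |ξ|²))) · [[2m+τ, 0, ξ₃, conj(η)], [0, 2m+τ, η, −ξ₃], [ξ₃, conj(η), τ, 0], [η, −ξ₃, 0, τ]] is positive definite. -/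
/-!
Write `a = 2m + τ` and `B = ξ₂ σ₁ + ξ₁ σ₂ + ξ₃ σ₃`. Up to the positive factor `1 / (|ξ|²(ω² + |ξ|²))`
and a reordering of the basis, `K` is the block matrix `[[a I, B], [Bᴴ, τ I]]`, and `B Bᴴ = |ξ|² I`.
Its Schur complement with respect to `τ I` is `(a - |ξ|² / τ) I`, which is positive definite because
`m - √(m² - ω²) ≥ ω² / (2m)` gives `τ ≥ |ξ|² / (2m)`, hence `a τ > 2m τ ≥ |ξ|²`.
-/

open scoped ComplexOrder

/-- The 4×4 Hermitian matrix `K(ω,ξ)` from the threshold classification. -/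
noncomputable def diracKernelMatrix (m ω ξ₁ ξ₂ ξ₃ : ℝ) : Matrix (Fin 4) (Fin 4) ℂ :=
  let normξsq : ℝ := ξ₁ ^ 2 + ξ₂ ^ 2 + ξ₃ ^ 2
  let τ : ℝ := normξsq / ω ^ 2 * (m - Real.sqrt (m ^ 2 - ω ^ 2))
  let η : ℂ := ξ₂ + Complex.I * ξ₁
  (((1 / (normξsq * (ω ^ 2 + normξsq)) : ℝ) : ℂ)) •
    !![(2 * m + τ : ℂ), 0, (ξ₃ : ℂ), starRingEnd ℂ η;
       0, (2 * m + τ : ℂ), η, -(ξ₃ : ℂ);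
       (ξ₃ : ℂ), starRingEnd ℂ η, (τ : ℂ), 0;
       η, -(ξ₃ : ℂ), 0, (τ : ℂ)]

namespace Matrix

variable {m n R : Type*} [Fintype m] [Fintype n] [DecidableEq n]

theorem PosDef.fromBlocks₂₂_of_schur [CommRing R] [PartialOrder R] [StarRing R]
    [StarOrderedRing R] (A : Matrix m m R) (B : Matrix m n R) {D : Matrix n n R}
    (hD : D.PosDef) [Invertible D] (hS : (A - B * D⁻¹ * Bᴴ).PosDef) :
    (fromBlocks A B Bᴴ D).PosDef := by
  rw [posDef_iff_dotProduct_mulVec] at hS ⊢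
  refine ⟨(IsHermitian.fromBlocks₂₂ A B hD.1).2 hS.1, fun v hv => ?_⟩
  obtain ⟨x, y, rfl⟩ : ∃ x y, v = x ⊕ᵥ y :=
    ⟨v ∘ Sum.inl, v ∘ Sum.inr, (Sum.elim_comp_inl_inr v).symm⟩
  rw [dotProduct_mulVec, schur_complement_eq₂₂ A B x y hD.1, ← dotProduct_mulVec,
    ← dotProduct_mulVec]
  by_cases hx : x = 0
  · subst hx
    have hy : y ≠ 0 := by rintro rfl; exact hv (by ext (i | i) <;> rfl)
    simpa using (posDef_iff_dotProduct_mulVec.1 hD).2 hy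
  · exact add_pos_of_nonneg_of_pos ((posSemidef_iff_dotProduct_mulVec.1 hD.posSemidef).2 _)
      (hS.2 hx)

theorem PosDef.fromBlocks_smul_one {𝕜 : Type*} [RCLike 𝕜] [DecidableEq m] (B : Matrix m n 𝕜)
    {a s τ : ℝ} (hB : B * Bᴴ = (s : 𝕜) • 1) (hτ : 0 < τ) (h : s < a * τ) :
    (fromBlocks ((a : 𝕜) • 1) B Bᴴ ((τ : 𝕜) • 1)).PosDef := by
  have hD : ((τ : 𝕜) • (1 : Matrix n n 𝕜)).PosDef := PosDef.one.smul (RCLike.ofReal_pos.2 hτ)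
  have : Invertible ((τ : 𝕜) • (1 : Matrix n n 𝕜)) := hD.isUnit.invertible
  have hD_inv : ((τ : 𝕜) • (1 : Matrix n n 𝕜))⁻¹ = (τ⁻¹ : 𝕜) • (1 : Matrix n n 𝕜) :=
    inv_eq_left_inv <| by
      rw [Matrix.smul_mul, Matrix.mul_smul, Matrix.one_mul, smul_smul,
        inv_mul_cancel₀ (RCLike.ofReal_ne_zero.2 hτ.ne'), one_smul]
  have hS : (a : 𝕜) • (1 : Matrix m m 𝕜) - B * ((τ⁻¹ : 𝕜) • (1 : Matrix n n 𝕜)) * Bᴴ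
      = ((a - s / τ : ℝ) : 𝕜) • 1 := by
    rw [Matrix.mul_smul, Matrix.mul_one, Matrix.smul_mul, hB, smul_smul, ← sub_smul]
    push_cast
    ring_nf
  refine hD.fromBlocks₂₂_of_schur _ B ?_
  rw [hD_inv, hS]
  exact PosDef.one.smul (RCLike.ofReal_pos.2 (by rwa [sub_pos, div_lt_iff₀ hτ]))

end Matrix

open Matrix Complex

/-- `ξ₂ σ₁ + ξ₁ σ₂ + ξ₃ σ₃` in terms of the Pauli matrices `σᵢ`. -/
def pauliDot (ξ₁ ξ₂ ξ₃ : ℝ) : Matrix (Fin 2) (Fin 2) ℂ :=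
  !![(ξ₃ : ℂ), starRingEnd ℂ (ξ₂ + I * ξ₁); ξ₂ + I * ξ₁, -(ξ₃ : ℂ)]

theorem pauliDot_mul_conjTranspose (ξ₁ ξ₂ ξ₃ : ℝ) :
    pauliDot ξ₁ ξ₂ ξ₃ * (pauliDot ξ₁ ξ₂ ξ₃)ᴴ = ((ξ₁ ^ 2 + ξ₂ ^ 2 + ξ₃ ^ 2 : ℝ) : ℂ) • 1 := by
  ext i j
  fin_cases i <;> fin_cases j <;>
    simp [pauliDot, Matrix.mul_apply, Fin.sum_univ_two] <;> ring_nf <;> simp only [I_sq] <;> ring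

theorem fromBlocks_pauliDot_submatrix (a τ : ℂ) (ξ₁ ξ₂ ξ₃ : ℝ) :
    (fromBlocks (a • 1) (pauliDot ξ₁ ξ₂ ξ₃) (pauliDot ξ₁ ξ₂ ξ₃)ᴴ (τ • 1)).submatrix
        finSumFinEquiv.symm finSumFinEquiv.symm =
      !![a, 0, (ξ₃ : ℂ), starRingEnd ℂ (ξ₂ + I * ξ₁);
        0, a, ξ₂ + I * ξ₁, -(ξ₃ : ℂ);
        (ξ₃ : ℂ), starRingEnd ℂ (ξ₂ + I * ξ₁), τ, 0;
        ξ₂ + I * ξ₁, -(ξ₃ : ℂ), 0, τ] := by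
  ext i j
  fin_cases i <;> fin_cases j <;> simp [pauliDot, finSumFinEquiv, Fin.addCases, fromBlocks]

theorem div_two_mul_le_sub_sqrt_sq_sub_sq {m ω : ℝ} (hm : 0 < m) (hωm : ω ^ 2 ≤ m ^ 2) :
    ω ^ 2 / (2 * m) ≤ m - √(m ^ 2 - ω ^ 2) := by
  have hq : ω ^ 2 / (2 * m) * (2 * m) = ω ^ 2 := div_mul_cancel₀ _ (by positivity)
  rw [le_sub_comm, Real.sqrt_le_iff]
  constructor <;> nlinarith [sq_nonneg (ω ^ 2 / (2 * m))]

theorem stmt_7 (m ω ξ₁ ξ₂ ξ₃ : ℝ) (hm : 0 < m) (hω : 0 < ω) (hωm : ω < m)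
    (hξ : ¬(ξ₁ = 0 ∧ ξ₂ = 0 ∧ ξ₃ = 0)) :
    (diracKernelMatrix m ω ξ₁ ξ₂ ξ₃).PosDef := by
  set s := ξ₁ ^ 2 + ξ₂ ^ 2 + ξ₃ ^ 2
  have hs : 0 < s := by
    contrapose! hξ
    refine ⟨?_, ?_, ?_⟩ <;> nlinarith [sq_nonneg ξ₁, sq_nonneg ξ₂, sq_nonneg ξ₃]
  set τ := s / ω ^ 2 * (m - √(m ^ 2 - ω ^ 2))
  have hτ_ge : s / (2 * m) ≤ τ :=
    calc s / (2 * m) = s / ω ^ 2 * (ω ^ 2 / (2 * m)) := by field_simp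
      _ ≤ τ := mul_le_mul_of_nonneg_left
          (div_two_mul_le_sub_sqrt_sq_sub_sq hm (pow_le_pow_left₀ hω.le hωm.le 2)) (by positivity)
  have hτ : 0 < τ := (div_pos hs (by positivity)).trans_le hτ_ge
  have hsτ : s < (2 * m + τ) * τ := by
    rw [div_le_iff₀ (by positivity)] at hτ_ge
    nlinarith
  have hc : 0 < 1 / (s * (ω ^ 2 + s)) := by positivity
  have hK := (PosDef.fromBlocks_smul_one (pauliDot ξ₁ ξ₂ ξ₃) (pauliDot_mul_conjTranspose ξ₁ ξ₂ ξ₃)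
    hτ hsτ).submatrix finSumFinEquiv.symm.injective
  rw [fromBlocks_pauliDot_submatrix] at hK
  push_cast at hK
  exact hK.smul (RCLike.ofReal_pos.2 hc)
end

section
/- Let φ : [a,b] → ℝ be C² with |φ''(z)| ≥ t > 0 for all z ∈ [a,b], and let ψ : [a,b] → ℂ be C¹. Then |∫_a^b e^{iφ(z)} ψ(z) dz| ≤ C·t^{−1/2}·(|ψ(b)| + ∫_a^b |ψ'(z)| dz) for an absolute constant C. -/
/-!
Where `|φ'| ≥ δ` and `φ'` is monotone, writing `e^{iφ} = (e^{iφ})' / (iφ')` and integrating by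
parts bounds the oscillatory integral by `2/δ`. If `φ'' ≥ t`, the set where `|φ'| < δ` is an
interval of length at most `2δ/t`, so splitting `[a, b]` into three pieces gives `2/δ + 2δ/t + 2/δ`,
which is `6/√t` for `δ = √t`; the case `φ'' ≤ -t` follows by complex conjugation. The amplitude
`ψ` is handled by a second integration by parts against the primitive `∫_a^x e^{iφ}`, which is
bounded by `6/√t` uniformly in `x`.
-/

open Set MeasureTheory intervalIntegral Complex
open scoped Interval

theorem forall_le_or_forall_le_neg_of_le_abs {f : ℝ → ℝ} {s : Set ℝ} {c : ℝ}
    (hs : IsPreconnected s) (hf : ContinuousOn f s) (hc : 0 < c) (h : ∀ x ∈ s, c ≤ |f x|) :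
    (∀ x ∈ s, c ≤ f x) ∨ (∀ x ∈ s, f x ≤ -c) := by
  by_contra! ⟨⟨x, hx, hfx⟩, ⟨y, hy, hfy⟩⟩
  have hfx0 : f x ≤ 0 := by cases abs_cases (f x) <;> linarith [h x hx]
  have hfy0 : 0 ≤ f y := by cases abs_cases (f y) <;> linarith [h y hy]
  obtain ⟨z, hz, hfz⟩ := hs.intermediate_value hx hy hf ⟨hfx0, hfy0⟩
  linarith [h z hz, hfz ▸ abs_zero (α := ℝ)]

section FirstDerivativeTest

variable {a b : ℝ} {φ g g' : ℝ → ℝ}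

theorem norm_integral_exp_I_mul_le_of_deriv_ne_zero (hab : a ≤ b)
    (hφ : ∀ x ∈ Icc a b, HasDerivWithinAt φ (g x) (Icc a b) x)
    (hg : ∀ x ∈ Icc a b, HasDerivWithinAt g (g' x) (Icc a b) x)
    (hg'c : ContinuousOn g' (Icc a b)) (hg'0 : ∀ x ∈ Icc a b, 0 ≤ g' x)
    (hg0 : ∀ x ∈ Icc a b, g x ≠ 0) :
    ‖∫ x in a..b, exp (I * φ x)‖ ≤ |g b|⁻¹ + |g a|⁻¹ + ((g a)⁻¹ - (g b)⁻¹) := by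
  have hgc : ContinuousOn g (Icc a b) := fun x hx => (hg x hx).continuousWithinAt
  have hφc : ContinuousOn φ (Icc a b) := fun x hx => (hφ x hx).continuousWithinAt
  have hinv (x) (hx : x ∈ Icc a b) :
      HasDerivWithinAt (fun y => (g y)⁻¹) (-g' x / g x ^ 2) (Icc a b) x :=
    (hg x hx).inv (hg0 x hx)
  have hinv'c : ContinuousOn (fun x => -g' x / g x ^ 2) (Icc a b) :=
    hg'c.neg.div (hgc.pow 2) fun x hx => pow_ne_zero 2 (hg0 x hx)
  -- `exp (I φ) = u v'` with `u = 1 / (I g) = -I / g` and `v = exp (I φ)`; integrate by parts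
  set u : ℝ → ℂ := fun x => -I * ((g x)⁻¹ : ℝ)
  set u' : ℝ → ℂ := fun x => -I * ((-g' x / g x ^ 2 : ℝ) : ℂ)
  set v : ℝ → ℂ := fun x => exp (I * φ x)
  set v' : ℝ → ℂ := fun x => exp (I * φ x) * (I * g x)
  have hu (x) (hx : x ∈ [[a, b]]) : HasDerivWithinAt u (u' x) [[a, b]] x := by
    rw [uIcc_of_le hab] at hx ⊢
    exact (hinv x hx).ofReal_comp.const_mul (-I)
  have hv (x) (hx : x ∈ [[a, b]]) : HasDerivWithinAt v (v' x) [[a, b]] x := by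
    rw [uIcc_of_le hab] at hx ⊢
    exact ((hφ x hx).ofReal_comp.const_mul I).cexp
  have hu'c : ContinuousOn u' (Icc a b) := by fun_prop
  have hv'c : ContinuousOn v' (Icc a b) := by fun_prop
  have hibp := integral_mul_deriv_eq_deriv_mul_of_hasDerivWithinAt hu hv
    (hu'c.intervalIntegrable_of_Icc hab) (hv'c.intervalIntegrable_of_Icc hab)
  have huv' : ∀ x ∈ [[a, b]], u x * v' x = v x := by
    intro x hx
    rw [uIcc_of_le hab] at hx
    have : (g x : ℂ) ≠ 0 := by exact_mod_cast hg0 x hx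
    simp only [u, v', v]
    push_cast
    field_simp
    rw [I_sq]; ring
  have hnorm_u (x : ℝ) : ‖u x‖ = |g x|⁻¹ := by simp [u]
  have hnorm_u'v : ∀ x ∈ [[a, b]], ‖u' x * v x‖ = -(-g' x / g x ^ 2) := by
    intro x hx
    rw [uIcc_of_le hab] at hx
    simp only [u', v, norm_mul, norm_exp_I_mul_ofReal, norm_neg, norm_I, Complex.norm_real,
      Real.norm_eq_abs, one_mul, mul_one]
    rw [abs_of_nonpos (div_nonpos_of_nonpos_of_nonneg (neg_nonpos.2 (hg'0 x hx)) (sq_nonneg _))]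
  have hftc : ∫ x in a..b, -g' x / g x ^ 2 = (g b)⁻¹ - (g a)⁻¹ :=
    integral_eq_sub_of_hasDerivAt_of_le hab (hgc.inv₀ hg0)
      (fun x hx => (hinv x (Ioo_subset_Icc_self hx)).hasDerivAt (Icc_mem_nhds hx.1 hx.2))
      (hinv'c.intervalIntegrable_of_Icc hab)
  calc ‖∫ x in a..b, v x‖
      = ‖u b * v b - u a * v a - ∫ x in a..b, u' x * v x‖ := by
        rw [← hibp, integral_congr huv']
    _ ≤ ‖u b * v b‖ + ‖u a * v a‖ + ∫ x in a..b, ‖u' x * v x‖ :=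
        (norm_sub_le _ _).trans (add_le_add (norm_sub_le _ _) (norm_integral_le_integral_norm hab))
    _ = |g b|⁻¹ + |g a|⁻¹ + ((g a)⁻¹ - (g b)⁻¹) := by
        rw [integral_congr hnorm_u'v, intervalIntegral.integral_neg, hftc]
        simp [hnorm_u, v, norm_exp_I_mul_ofReal]

theorem norm_integral_exp_I_mul_le_of_le_abs_deriv {c : ℝ} (hab : a ≤ b) (hc : 0 < c)
    (hφ : ∀ x ∈ Icc a b, HasDerivWithinAt φ (g x) (Icc a b) x)
    (hg : ∀ x ∈ Icc a b, HasDerivWithinAt g (g' x) (Icc a b) x)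
    (hg'c : ContinuousOn g' (Icc a b)) (hg'0 : ∀ x ∈ Icc a b, 0 ≤ g' x)
    (hgc : ∀ x ∈ Icc a b, c ≤ |g x|) :
    ‖∫ x in a..b, exp (I * φ x)‖ ≤ 2 / c := by
  have hg0 (x) (hx : x ∈ Icc a b) : g x ≠ 0 :=
    abs_pos.1 (hc.trans_le (hgc x hx))
  refine (norm_integral_exp_I_mul_le_of_deriv_ne_zero hab hφ hg hg'c hg'0 hg0).trans ?_
  have ha := left_mem_Icc.2 hab
  have hb := right_mem_Icc.2 hab
  rw [div_eq_mul_inv]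
  -- `g` has constant sign, so the boundary terms add up to `2 / |g|` at one endpoint
  rcases forall_le_or_forall_le_neg_of_le_abs isPreconnected_Icc
    (fun x hx => (hg x hx).continuousWithinAt) hc hgc with hpos | hneg
  · calc |g b|⁻¹ + |g a|⁻¹ + ((g a)⁻¹ - (g b)⁻¹) = 2 * |g a|⁻¹ := by
          rw [abs_of_pos (hc.trans_le (hpos a ha)), abs_of_pos (hc.trans_le (hpos b hb))]; ring
      _ ≤ 2 * c⁻¹ := by gcongr; exact hgc a ha
  · calc |g b|⁻¹ + |g a|⁻¹ + ((g a)⁻¹ - (g b)⁻¹) = 2 * |g b|⁻¹ := by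
          rw [abs_of_neg ((hneg a ha).trans_lt (neg_neg_of_pos hc)),
            abs_of_neg ((hneg b hb).trans_lt (neg_neg_of_pos hc)), inv_neg, inv_neg]; ring
      _ ≤ 2 * c⁻¹ := by gcongr; exact hgc b hb

end FirstDerivativeTest

theorem exists_split_of_monotoneOn {a b L U : ℝ} {g : ℝ → ℝ} (hab : a ≤ b)
    (hg : ContinuousOn g (Icc a b)) (hmono : MonotoneOn g (Icc a b)) (hLU : L < U) :
    ∃ c d, a ≤ c ∧ c ≤ d ∧ d ≤ b ∧ (c = a ∨ g c ≤ L) ∧ (d = b ∨ U ≤ g d) ∧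
      g d - g c ≤ U - L := by
  have ha := left_mem_Icc.2 hab
  have hb := right_mem_Icc.2 hab
  by_cases hbL : g b ≤ L
  · exact ⟨b, b, hab, le_rfl, le_rfl, Or.inr hbL, Or.inl rfl, by linarith⟩
  by_cases haU : U ≤ g a
  · exact ⟨a, a, le_rfl, le_rfl, hab, Or.inl rfl, Or.inr haU, by linarith⟩
  rw [not_le] at hbL haU
  obtain ⟨c, hc, hc_spec, hgc⟩ : ∃ c ∈ Icc a b, (c = a ∨ g c = L) ∧ L ≤ g c := by
    by_cases haL : L ≤ g a
    · exact ⟨a, ha, Or.inl rfl, haL⟩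
    · obtain ⟨c, hc, hgc⟩ := intermediate_value_Icc hab hg ⟨(not_le.1 haL).le, hbL.le⟩
      exact ⟨c, hc, Or.inr hgc, hgc.ge⟩
  obtain ⟨d, hd, hd_spec, hgd⟩ : ∃ d ∈ Icc a b, (d = b ∨ g d = U) ∧ g d ≤ U := by
    by_cases hbU : g b ≤ U
    · exact ⟨b, hb, Or.inl rfl, hbU⟩
    · obtain ⟨d, hd, hgd⟩ := intermediate_value_Icc hab hg ⟨haU.le, (not_le.1 hbU).le⟩
      exact ⟨d, hd, Or.inr hgd, hgd.le⟩
  have hcd : c ≤ d := by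
    rcases hc_spec with rfl | hcL
    · exact hd.1
    rcases hd_spec with rfl | hdU
    · exact hc.2
    by_contra! hdc
    linarith [hmono hd hc hdc.le]
  exact ⟨c, d, hc.1, hcd, hd.2, hc_spec.imp_right le_of_eq, hd_spec.imp_right ge_of_eq,
    by linarith⟩

theorem norm_integral_exp_I_mul_neg (a b : ℝ) (φ : ℝ → ℝ) :
    ‖∫ x in a..b, exp (I * ↑(-φ x))‖ = ‖∫ x in a..b, exp (I * φ x)‖ := by
  have hconj (x : ℝ) : exp (I * ↑(-φ x)) = (starRingEnd ℂ) (exp (I * φ x)) := by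
    rw [← exp_conj, map_mul, conj_I, conj_ofReal, ofReal_neg]; ring_nf
  simp_rw [hconj, intervalIntegral_conj, RCLike.norm_conj]

section SecondDerivativeTest

variable {a b t : ℝ} {φ g g' : ℝ → ℝ}

theorem norm_integral_exp_I_mul_le_of_le_deriv2 (hab : a ≤ b) (ht : 0 < t)
    (hφ : ∀ x ∈ Icc a b, HasDerivWithinAt φ (g x) (Icc a b) x)
    (hg : ∀ x ∈ Icc a b, HasDerivWithinAt g (g' x) (Icc a b) x)
    (hg'c : ContinuousOn g' (Icc a b)) (hg't : ∀ x ∈ Icc a b, t ≤ g' x) :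
    ‖∫ x in a..b, exp (I * φ x)‖ ≤ 6 / √t := by
  set δ := √t
  have hδ : 0 < δ := Real.sqrt_pos.2 ht
  have hg'0 (x) (hx : x ∈ Icc a b) : 0 ≤ g' x := ht.le.trans (hg't x hx)
  have hgc : ContinuousOn g (Icc a b) := fun x hx => (hg x hx).continuousWithinAt
  have hφc : ContinuousOn φ (Icc a b) := fun x hx => (hφ x hx).continuousWithinAt
  have hint (c d) (hc : c ∈ Icc a b) (hd : d ∈ Icc a b) :
      IntervalIntegrable (fun x => exp (I * φ x)) volume c d :=
    (ContinuousOn.mono (by fun_prop) (uIcc_subset_Icc hc hd)).intervalIntegrable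
  have hmono : MonotoneOn g (Icc a b) :=
    monotoneOn_of_hasDerivWithinAt_nonneg (convex_Icc a b) hgc
      (fun x hx => (hg x (interior_subset hx)).mono interior_subset)
      (fun x hx => hg'0 x (interior_subset hx))
  have hgrow : ∀ x ∈ Icc a b, ∀ y ∈ Icc a b, x ≤ y → t * (y - x) ≤ g y - g x := by
    refine (convex_Icc a b).mul_sub_le_image_sub_of_le_deriv hgc ?_ ?_ <;>
      intro x hx <;> rw [interior_Icc] at hx
    · exact ((hg x (Ioo_subset_Icc_self hx)).hasDerivAt
        (Icc_mem_nhds hx.1 hx.2)).differentiableAt.differentiableWithinAt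
    · rw [((hg x (Ioo_subset_Icc_self hx)).hasDerivAt (Icc_mem_nhds hx.1 hx.2)).deriv]
      exact hg't x (Ioo_subset_Icc_self hx)
  have hfirst (c d) (hac : a ≤ c) (hcd : c ≤ d) (hdb : d ≤ b)
      (hgδ : ∀ x ∈ Icc c d, δ ≤ |g x|) :
      ‖∫ x in c..d, exp (I * φ x)‖ ≤ 2 / δ := by
    have hsub : Icc c d ⊆ Icc a b := Icc_subset_Icc hac hdb
    exact norm_integral_exp_I_mul_le_of_le_abs_deriv hcd hδ
      (fun x hx => (hφ x (hsub hx)).mono hsub) (fun x hx => (hg x (hsub hx)).mono hsub)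
      (hg'c.mono hsub) (fun x hx => hg'0 x (hsub hx)) hgδ
  -- `|g| < δ` only on an interval of length `≤ 2δ/t`, where the trivial bound is used;
  -- `δ = √t` balances this against the bound `2/δ` on the two outer pieces
  obtain ⟨c, d, hac, hcd, hdb, hc, hd, hgcd⟩ :=
    exists_split_of_monotoneOn hab hgc hmono (neg_lt_self hδ)
  have hcI : c ∈ Icc a b := ⟨hac, hcd.trans hdb⟩
  have hdI : d ∈ Icc a b := ⟨hac.trans hcd, hdb⟩
  have hleft : ‖∫ x in a..c, exp (I * φ x)‖ ≤ 2 / δ := by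
    rcases hc with rfl | hgc
    · simp only [integral_same, norm_zero]; positivity
    refine hfirst a c le_rfl hac (hcd.trans hdb) fun x hx => ?_
    have := (hmono ⟨hx.1, hx.2.trans hcI.2⟩ hcI hx.2).trans hgc
    exact le_abs.2 (Or.inr (by linarith))
  have hright : ‖∫ x in d..b, exp (I * φ x)‖ ≤ 2 / δ := by
    rcases hd with rfl | hgd
    · simp only [integral_same, norm_zero]; positivity
    refine hfirst d b (hac.trans hcd) hdb le_rfl fun x hx => ?_
    exact le_abs.2 (Or.inl (hgd.trans (hmono hdI ⟨hdI.1.trans hx.1, hx.2⟩ hx.1)))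
  have hmid : ‖∫ x in c..d, exp (I * φ x)‖ ≤ 2 / δ := by
    refine (norm_integral_le_of_norm_le_const (C := 1)
      fun x _ => (norm_exp_I_mul_ofReal _).le).trans ?_
    have hδδ : δ * δ = t := Real.mul_self_sqrt ht.le
    rw [one_mul, abs_of_nonneg (sub_nonneg.2 hcd), le_div_iff₀ hδ]
    nlinarith [hgrow c hcI d hdI hcd]
  rw [← integral_add_adjacent_intervals (hint a c (left_mem_Icc.2 hab) hcI)
      ((hint c d hcI hdI).trans (hint d b hdI (right_mem_Icc.2 hab))),
    ← integral_add_adjacent_intervals (hint c d hcI hdI) (hint d b hdI (right_mem_Icc.2 hab))]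
  calc _ ≤ ‖∫ x in a..c, exp (I * φ x)‖ +
          (‖∫ x in c..d, exp (I * φ x)‖ + ‖∫ x in d..b, exp (I * φ x)‖) :=
        (norm_add_le _ _).trans (by gcongr; exact norm_add_le _ _)
    _ ≤ 2 / δ + (2 / δ + 2 / δ) := by gcongr
    _ = 6 / δ := by ring

theorem norm_integral_exp_I_mul_le_of_le_abs_deriv2 (hab : a ≤ b) (ht : 0 < t)
    (hφ : ∀ x ∈ Icc a b, HasDerivWithinAt φ (g x) (Icc a b) x)
    (hg : ∀ x ∈ Icc a b, HasDerivWithinAt g (g' x) (Icc a b) x)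
    (hg'c : ContinuousOn g' (Icc a b)) (hg't : ∀ x ∈ Icc a b, t ≤ |g' x|) :
    ‖∫ x in a..b, exp (I * φ x)‖ ≤ 6 / √t := by
  rcases forall_le_or_forall_le_neg_of_le_abs isPreconnected_Icc hg'c ht hg't with hpos | hneg
  · exact norm_integral_exp_I_mul_le_of_le_deriv2 hab ht hφ hg hg'c hpos
  · rw [← norm_integral_exp_I_mul_neg]
    exact norm_integral_exp_I_mul_le_of_le_deriv2 hab ht (fun x hx => (hφ x hx).neg)
      (fun x hx => (hg x hx).neg) hg'c.neg fun x hx => le_neg.2 (hneg x hx)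

end SecondDerivativeTest

theorem norm_integral_mul_le_of_norm_integral_le {a b M : ℝ} {f ψ ψ' : ℝ → ℂ} (hab : a ≤ b)
    (hf : ContinuousOn f (Icc a b))
    (hψ : ∀ x ∈ Icc a b, HasDerivWithinAt ψ (ψ' x) (Icc a b) x)
    (hψ'c : ContinuousOn ψ' (Icc a b)) (hM : ∀ x ∈ Icc a b, ‖∫ z in a..x, f z‖ ≤ M) :
    ‖∫ z in a..b, f z * ψ z‖ ≤ M * (‖ψ b‖ + ∫ z in a..b, ‖ψ' z‖) := by
  set F : ℝ → ℂ := fun x => ∫ z in a..x, f z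
  rw [← uIcc_of_le hab] at hf hψ hψ'c hM
  have hFc : ContinuousOn F [[a, b]] :=
    continuousOn_primitive_interval (hf.integrableOn_compact isCompact_uIcc)
  have hF (x) (hx : x ∈ Ioo (min a b) (max a b)) : HasDerivAt F (f x) x := by
    have hxI : x ∈ [[a, b]] := Ioo_subset_Icc_self hx
    exact integral_hasDerivAt_right (hf.mono (uIcc_subset_uIcc_left hxI)).intervalIntegrable
      ((hf.mono Ioo_subset_Icc_self).stronglyMeasurableAtFilter isOpen_Ioo x hx)
      (hf.continuousAt (Icc_mem_nhds hx.1 hx.2))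
  have hψ' (x) (hx : x ∈ Ioo (min a b) (max a b)) : HasDerivAt ψ (ψ' x) x :=
    (hψ x (Ioo_subset_Icc_self hx)).hasDerivAt (Icc_mem_nhds hx.1 hx.2)
  have hfψ : IntervalIntegrable (fun z => f z * ψ z) volume a b :=
    (hf.mul fun x hx => (hψ x hx).continuousWithinAt).intervalIntegrable
  have hFψ' : IntervalIntegrable (fun z => F z * ψ' z) volume a b :=
    (hFc.mul hψ'c).intervalIntegrable
  have hparts : ∫ z in a..b, f z * ψ z = F b * ψ b - ∫ z in a..b, F z * ψ' z := by
    have := integral_deriv_mul_eq_sub_of_hasDerivAt hFc (fun x hx => (hψ x hx).continuousWithinAt)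
      hF hψ' hf.intervalIntegrable hψ'c.intervalIntegrable
    rw [integral_add hfψ hFψ', show F a = 0 from integral_same, zero_mul, sub_zero] at this
    rw [← this, add_sub_cancel_right]
  have hFψ'_le : ∫ z in a..b, ‖F z * ψ' z‖ ≤ ∫ z in a..b, M * ‖ψ' z‖ :=
    integral_mono_on hab hFψ'.norm (hψ'c.norm.intervalIntegrable.const_mul M) fun x hx => by
      rw [norm_mul]; gcongr; exact hM x (uIcc_of_le hab ▸ hx)
  calc ‖∫ z in a..b, f z * ψ z‖
      ≤ ‖F b * ψ b‖ + ∫ z in a..b, ‖F z * ψ' z‖ := by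
        rw [hparts]
        exact (norm_sub_le _ _).trans (by gcongr; exact norm_integral_le_integral_norm hab)
    _ ≤ M * ‖ψ b‖ + ∫ z in a..b, M * ‖ψ' z‖ := by
        rw [norm_mul]; gcongr; exact hM b right_mem_uIcc
    _ = M * (‖ψ b‖ + ∫ z in a..b, ‖ψ' z‖) := by rw [intervalIntegral.integral_const_mul]; ring

theorem stmt_11 : ∃ C : ℝ, 0 < C ∧ ∀ (a b t : ℝ) (φ : ℝ → ℝ) (ψ : ℝ → ℂ),
    a ≤ b → 0 < t →
    ContDiffOn ℝ 2 φ (Set.Icc a b) →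
    (∀ z ∈ Set.Icc a b, t ≤ |iteratedDerivWithin 2 φ (Set.Icc a b) z|) →
    ContDiffOn ℝ 1 ψ (Set.Icc a b) →
    ‖∫ z in a..b, Complex.exp (Complex.I * (φ z : ℂ)) * ψ z‖ ≤
      C * t ^ (-(1 / 2 : ℝ)) *
        (‖ψ b‖ + ∫ z in a..b, ‖derivWithin ψ (Set.Icc a b) z‖) := by
  refine ⟨6, by norm_num, fun a b t φ ψ hab ht hφ hφ'' hψ => ?_⟩
  rcases hab.eq_or_lt with rfl | hab'
  · simp only [integral_same, norm_zero]; positivity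
  have hu : UniqueDiffOn ℝ (Icc a b) := uniqueDiffOn_Icc hab'
  set g := derivWithin φ (Icc a b)
  have hg : ContDiffOn ℝ 1 g (Icc a b) := hφ.derivWithin hu (by norm_num)
  have hφ' (x) (hx : x ∈ Icc a b) : HasDerivWithinAt φ (g x) (Icc a b) x :=
    (hφ.differentiableOn two_ne_zero x hx).hasDerivWithinAt
  have hg' (x) (hx : x ∈ Icc a b) : HasDerivWithinAt g (derivWithin g (Icc a b) x) (Icc a b) x :=
    (hg.differentiableOn one_ne_zero x hx).hasDerivWithinAt
  have hg'c : ContinuousOn (derivWithin g (Icc a b)) (Icc a b) :=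
    hg.continuousOn_derivWithin hu le_rfl
  have hφ''_eq : iteratedDerivWithin 2 φ (Icc a b) = derivWithin g (Icc a b) := by
    rw [iteratedDerivWithin_succ, iteratedDerivWithin_one]
  have hbound (x) (hx : x ∈ Icc a b) :
      ‖∫ z in a..x, exp (I * φ z)‖ ≤ 6 * t ^ (-(1 / 2 : ℝ)) := by
    have hsub : Icc a x ⊆ Icc a b := Icc_subset_Icc_right hx.2
    rw [Real.rpow_neg ht.le, ← Real.sqrt_eq_rpow, ← div_eq_mul_inv]
    exact norm_integral_exp_I_mul_le_of_le_abs_deriv2 hx.1 ht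
      (fun y hy => (hφ' y (hsub hy)).mono hsub) (fun y hy => (hg' y (hsub hy)).mono hsub)
      (hg'c.mono hsub) fun y hy => hφ''_eq ▸ hφ'' y (hsub hy)
  exact norm_integral_mul_le_of_norm_integral_le hab
    (by have := hφ.continuousOn; fun_prop)
    (fun x hx => (hψ.differentiableOn one_ne_zero x hx).hasDerivWithinAt)
    (hψ.continuousOn_derivWithin hu le_rfl) hbound
end

section
/- For all real γ with |γ| ≤ 1/2 and all t > 0, the function g(s) = (s/√(1−γ²))·(√(1 + s²/4) + sγ/2) is smooth on ℝ, satisfies g(0) = 0, g'(0) = 1/√(1−γ²) > 0, and is a diffeomorphism from a neighborhood of 0 onto a neighborhood of 0; moreover the change of variables z = g(s) satisfies the identity √((g(s)+ω)² + 1) − g(s)·γ − 1/√(1−γ²) = s²·√(1−γ²)/2, where ω = γ/√(1−γ²). -/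
theorem stmt_18 (γ : ℝ) (hγ : |γ| ≤ 1 / 2) :
    let g : ℝ → ℝ := fun s =>
      s / Real.sqrt (1 - γ ^ 2) * (Real.sqrt (1 + s ^ 2 / 4) + s * γ / 2)
    let ω : ℝ := γ / Real.sqrt (1 - γ ^ 2)
    ContDiff ℝ (⊤ : ℕ∞) g ∧ g 0 = 0 ∧
      deriv g 0 = 1 / Real.sqrt (1 - γ ^ 2) ∧ 0 < deriv g 0 ∧
      (∃ U ∈ nhds (0 : ℝ), Set.InjOn g U ∧ g '' U ∈ nhds (0 : ℝ)) ∧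
      ∀ s : ℝ,
        Real.sqrt ((g s + ω) ^ 2 + 1) - g s * γ - 1 / Real.sqrt (1 - γ ^ 2) =
          s ^ 2 * Real.sqrt (1 - γ ^ 2) / 2 := by
  intro g ω
  have hγ' : γ ^ 2 ≤ 1 / 4 := by
    have := abs_le.mp hγ
    nlinarith [this.1, this.2]
  have h1 : (0 : ℝ) < 1 - γ ^ 2 := by nlinarith
  have hc : 0 < Real.sqrt (1 - γ ^ 2) := Real.sqrt_pos.mpr h1
  have hc2 : Real.sqrt (1 - γ ^ 2) ^ 2 = 1 - γ ^ 2 := Real.sq_sqrt h1.le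
  set c := Real.sqrt (1 - γ ^ 2) with hcdef
  -- smoothness
  have hg : ContDiff ℝ (⊤ : ℕ∞) g := by
    apply ContDiff.mul
    · exact (contDiff_id.div_const c)
    · apply ContDiff.add
      · apply ContDiff.sqrt
        · exact contDiff_const.add ((contDiff_id.pow 2).div_const 4)
        · intro s; positivity
      · exact (contDiff_id.mul contDiff_const).div_const 2
  -- g 0 = 0
  have hg0 : g 0 = 0 := by simp [g]
  -- derivative at 0
  have hder : HasDerivAt g (1 / c) 0 := by
    have h1' : HasDerivAt (fun s : ℝ => s / c) (1 / c) 0 := (hasDerivAt_id 0).div_const c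
    have hinner : HasDerivAt (fun s : ℝ => 1 + s ^ 2 / 4) 0 0 := by
      have : HasDerivAt (fun s : ℝ => 1 + s ^ 2 / 4) (0 + (2 * 0 ^ (2 - 1)) / 4) 0 :=
        (hasDerivAt_const 0 (1 : ℝ)).add ((hasDerivAt_pow 2 0).div_const 4)
      simpa using this
    have hsqrt : HasDerivAt (fun s : ℝ => Real.sqrt (1 + s ^ 2 / 4))
        (1 / (2 * Real.sqrt (1 + (0:ℝ) ^ 2 / 4)) * 0) 0 :=
      (Real.hasDerivAt_sqrt (by norm_num)).comp 0 hinner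
    have hψ : HasDerivAt (fun s : ℝ => Real.sqrt (1 + s ^ 2 / 4) + s * γ / 2)
        (1 / (2 * Real.sqrt (1 + (0:ℝ) ^ 2 / 4)) * 0 + γ / 2) 0 := by
      apply hsqrt.add
      simpa using ((hasDerivAt_id (0:ℝ)).mul_const γ).div_const 2
    have := h1'.fun_mul hψ
    simpa using this
  have hderiv : deriv g 0 = 1 / c := hder.deriv
  have hderivpos : 0 < deriv g 0 := by rw [hderiv]; positivity
  refine ⟨hg, hg0, hderiv, hderivpos, ?_, ?_⟩
  · -- local inverse
    have hst : HasStrictDerivAt g (1 / c) 0 := by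
      have := (hg.contDiffAt (x := 0)).hasStrictDerivAt (by simp)
      rwa [hderiv] at this
    have hne : (1 / c : ℝ) ≠ 0 := by positivity
    have hF := hst.hasStrictFDerivAt_equiv hne
    set P := HasStrictFDerivAt.toOpenPartialHomeomorph g hF with hP
    refine ⟨P.source, P.open_source.mem_nhds (HasStrictFDerivAt.mem_toOpenPartialHomeomorph_source hF), ?_, ?_⟩
    · have : Set.InjOn P P.source := P.injOn
      rwa [HasStrictFDerivAt.toOpenPartialHomeomorph_coe hF] at this
    · have himg : g '' P.source = P.target := by
        rw [← P.image_source_eq_target, HasStrictFDerivAt.toOpenPartialHomeomorph_coe hF]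
      rw [himg]
      have h0mem : (0 : ℝ) ∈ P.target := by
        have := HasStrictFDerivAt.image_mem_toOpenPartialHomeomorph_target hF
        rwa [hg0] at this
      exact P.open_target.mem_nhds h0mem
  · -- the identity
    intro s
    set r := Real.sqrt (1 + s ^ 2 / 4) with hrdef
    have hrpos : 0 < r := Real.sqrt_pos.mpr (by positivity)
    have hr2 : r ^ 2 = 1 + s ^ 2 / 4 := Real.sq_sqrt (by positivity)
    have hgs : g s = (s * r + s ^ 2 * γ / 2) / c := by
      simp only [g, ← hrdef]
      field_simp
      ring
    have hω : ω = γ / c := rfl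
    -- positivity of B
    have hB : 0 ≤ s * γ * r + 1 + s ^ 2 / 2 := by
      have h2 := abs_le.mp hγ
      nlinarith [sq_nonneg (s * r - 2), sq_nonneg (s * r + 2), sq_nonneg s,
        mul_pos hrpos hrpos, sq_nonneg (s * r * γ + 1), sq_nonneg (s * r * γ - 1),
        sq_nonneg (s * γ + 1), sq_nonneg (s * γ - 1), hr2]
    have poly : (s * r + s ^ 2 * γ / 2 + γ) ^ 2 + c ^ 2 =
        (s * γ * r + 1 + s ^ 2 / 2) ^ 2 := by
      linear_combination (s ^ 2 * (1 - γ ^ 2)) * hr2 + hc2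
    have hsum : g s + ω = (s * r + s ^ 2 * γ / 2 + γ) / c := by
      rw [hgs, hω]; ring
    have key : (g s + ω) ^ 2 + 1 = ((s * γ * r + 1 + s ^ 2 / 2) / c) ^ 2 := by
      rw [hsum]
      field_simp
      linear_combination 4 * poly
    have hsqrt : Real.sqrt ((g s + ω) ^ 2 + 1) = (s * γ * r + 1 + s ^ 2 / 2) / c := by
      rw [key, Real.sqrt_sq (by positivity)]
    rw [hsqrt, hgs]
    field_simp
    linear_combination (-s ^ 2) * hc2
end
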